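/- arXiv:1605.08254 — 3 statements merged into one kernel-verified Lean document; each statement's English description precedes it below -/
import Mathlib

section
/- Let K ≥ 2, let S ⊆ ℝ^N be convex, let f : ℝ^N → ℝ^K be differentiable on S with ‖(Df)(z)‖ ≤ L for all z ∈ S (operator norm with respect to Euclidean norms), where L > 0. Fix a training point x_i ∈ S with label y_i ∈ {1,…,K}, and define the score o(x_i, y_i) := min_{j ≠ y_i} (1/√2)·((f(x_i))_{y_i} − (f(x_i))_j). If o(x_i, y_i) > 0, then every x ∈ S with L·‖x − x_i‖₂ < o(x_i, y_i) satisfies (f(x))_j < (f(x))_{y_i} for all j ≠ y_i; that is, the classifier g(x) = argmax_j (f(x))_j assigns label y_i to every point of S within distance o(x_i,y_i)/L of x_i. -/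
/-- The classification score `o(x, y) = min_{j ≠ y} (1/√2) ((f x)_y - (f x)_j)`. -/
noncomputable def score {N K : ℕ} (hK : 2 ≤ K)
    (f : EuclideanSpace ℝ (Fin N) → EuclideanSpace ℝ (Fin K))
    (x : EuclideanSpace ℝ (Fin N)) (y : Fin K) : ℝ :=
  (Finset.univ.erase y).inf'
    (by
      rw [← Finset.card_pos, Finset.card_erase_of_mem (Finset.mem_univ y),
        Finset.card_univ, Fintype.card_fin]
      omega)
    (fun j => (1 / Real.sqrt 2) * (f x y - f x j))

/-- **Classification margin bound** (Theorem 4, bound (20), of the paper).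
If the Jacobian of `f` has operator norm at most `L > 0` on a convex set `S`, and a
training sample `(xᵢ, yᵢ)` has positive score, then every `x ∈ S` with
`L * ‖x - xᵢ‖ < o(xᵢ, yᵢ)` is classified as `yᵢ`, i.e. `(f x)_j < (f x)_{yᵢ}` for
all `j ≠ yᵢ`. -/
theorem margin_bound
    (N K : ℕ) (hK : 2 ≤ K)
    (S : Set (EuclideanSpace ℝ (Fin N))) (hS : Convex ℝ S)
    (f : EuclideanSpace ℝ (Fin N) → EuclideanSpace ℝ (Fin K))
    (f' : EuclideanSpace ℝ (Fin N) → (EuclideanSpace ℝ (Fin N) →L[ℝ] EuclideanSpace ℝ (Fin K)))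
    (hf : ∀ z ∈ S, HasFDerivWithinAt f (f' z) S z)
    (L : ℝ) (hLpos : 0 < L) (hL : ∀ z ∈ S, ‖f' z‖ ≤ L)
    (xi : EuclideanSpace ℝ (Fin N)) (hxi : xi ∈ S) (yi : Fin K)
    (hscore : 0 < score hK f xi yi) :
    ∀ x ∈ S, L * ‖x - xi‖ < score hK f xi yi →
      ∀ j : Fin K, j ≠ yi → f x j < f x yi := by
  intro x hx hlt j hj
  have hlip : ‖f x - f xi‖ ≤ L * ‖x - xi‖ :=
    hS.norm_image_sub_le_of_norm_hasFDerivWithin_le hf hL hxi hx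
  have hsc : score hK f xi yi ≤ (1 / Real.sqrt 2) * (f xi yi - f xi j) :=
    Finset.inf'_le _ (Finset.mem_erase.2 ⟨hj, Finset.mem_univ j⟩)
  have hsqrt2 : (0:ℝ) < Real.sqrt 2 := Real.sqrt_pos.2 (by norm_num)
  have hsq2 : Real.sqrt 2 ^ 2 = 2 := Real.sq_sqrt (by norm_num)
  have hd : Real.sqrt 2 * score hK f xi yi ≤ f xi yi - f xi j := by
    have := mul_le_mul_of_nonneg_left hsc (le_of_lt hsqrt2)
    calc Real.sqrt 2 * score hK f xi yi
        ≤ Real.sqrt 2 * ((1 / Real.sqrt 2) * (f xi yi - f xi j)) := this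
      _ = f xi yi - f xi j := by field_simp
  set a : EuclideanSpace ℝ (Fin K) := f x - f xi with ha
  have hayi : a yi = f x yi - f xi yi := rfl
  have haj : a j = f x j - f xi j := rfl
  -- coordinate bound: a yi ^ 2 + a j ^ 2 ≤ ‖a‖ ^ 2
  have hcoord : a yi ^ 2 + a j ^ 2 ≤ ‖a‖ ^ 2 := by
    have hnorm : ‖a‖ ^ 2 = ∑ i, a i ^ 2 := by
      rw [EuclideanSpace.norm_eq, Real.sq_sqrt (by positivity)]
      simp [sq_abs]
    rw [hnorm]
    have : ({yi, j} : Finset (Fin K)) ⊆ Finset.univ := Finset.subset_univ _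
    calc a yi ^ 2 + a j ^ 2 = ∑ i ∈ ({yi, j} : Finset (Fin K)), a i ^ 2 := by
          rw [Finset.sum_pair (Ne.symm hj)]
      _ ≤ ∑ i, a i ^ 2 := Finset.sum_le_sum_of_subset_of_nonneg this
          (fun i _ _ => sq_nonneg _)
  have hna : (0:ℝ) ≤ ‖a‖ := norm_nonneg _
  have hna2 : ‖a‖ < score hK f xi yi := lt_of_le_of_lt hlip hlt
  -- |a yi - a j| ≤ √2 ‖a‖
  have habs : (a yi - a j) ^ 2 ≤ (Real.sqrt 2 * ‖a‖) ^ 2 := by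
    have h2 : (Real.sqrt 2 * ‖a‖) ^ 2 = 2 * ‖a‖ ^ 2 := by
      rw [mul_pow, hsq2]
    nlinarith [sq_nonneg (a yi + a j)]
  have habs2 : |a yi - a j| ≤ Real.sqrt 2 * ‖a‖ := by
    have h := Real.sqrt_le_sqrt habs
    rwa [Real.sqrt_sq_eq_abs, Real.sqrt_sq (by positivity)] at h
  have habs' : -(Real.sqrt 2 * ‖a‖) ≤ a yi - a j := neg_le_of_abs_le habs2
  have : 0 < f x yi - f x j := by
    have key : f x yi - f x j = (f xi yi - f xi j) + (a yi - a j) := by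
      rw [hayi, haj]; ring
    rw [key]
    have h1 : Real.sqrt 2 * ‖a‖ < Real.sqrt 2 * score hK f xi yi :=
      mul_lt_mul_of_pos_left hna2 hsqrt2
    linarith
  linarith
end

section
/- Let W be a real M×N matrix, let z_1, …, z_m ∈ ℝ^N be data vectors, and suppose that for every row index i, E_i := Σ_{k=1}^{m} ((W z_k)_i)² > 0. Define the batch-normalization matrix of a matrix V (with respect to the same data) as N(V) := diag((Σ_{k=1}^{m} ((V z_k)_i)²)^{−1/2}), and define the row-normalized matrix W^N by (W^N)_{ij} = W_{ij} / ‖w_i‖₂, where w_i is the i-th row of W. Then for every x ∈ ℝ^N, relu(N(W)·W·x) = N(W^N) · relu(W^N · x), where relu is applied coordinatewise as t ↦ max(t, 0). -/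
/-- **Batch normalization yields row-normalized weight matrices** (Theorem 5 of the paper).
With `N(V) = diag((∑ₖ ((V zₖ)_i)²)^{-1/2})` the batch-normalization matrix and `W^N` the
row-normalized version of `W`, we have `relu(N(W) W x) = N(W^N) relu(W^N x)`. -/
theorem batchnorm_row_normalized
    (M N m : ℕ)
    (W : Matrix (Fin M) (Fin N) ℝ)
    (z : Fin m → (Fin N → ℝ))
    (hE : ∀ i, 0 < ∑ k, (W.mulVec (z k) i) ^ 2)
    (WN : Matrix (Fin M) (Fin N) ℝ)
    (hWN : ∀ i j, WN i j = W i j / Real.sqrt (∑ j', (W i j') ^ 2)) :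
    ∀ x : Fin N → ℝ,
      (fun i => max
          (((Matrix.diagonal fun i' =>
              (Real.sqrt (∑ k, (W.mulVec (z k) i') ^ 2))⁻¹) * W).mulVec x i) 0)
        =
      (Matrix.diagonal fun i' =>
          (Real.sqrt (∑ k, (WN.mulVec (z k) i') ^ 2))⁻¹).mulVec
        (fun i => max (WN.mulVec x i) 0) := by
  intro x
  funext i
  have hn : 0 < Real.sqrt (∑ j', (W i j') ^ 2) := by
    rw [Real.sqrt_pos]
    rcases lt_or_eq_of_le (Finset.sum_nonneg fun j' _ => sq_nonneg (W i j')) with h | h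
    · exact h
    · exfalso
      have hz : ∀ j', W i j' = 0 := by
        intro j'
        have := (Finset.sum_eq_zero_iff_of_nonneg
          (fun j' _ => sq_nonneg (W i j'))).1 h.symm j' (Finset.mem_univ _)
        exact (pow_eq_zero_iff two_ne_zero).1 this
      have : ∑ k, (W.mulVec (z k) i) ^ 2 = 0 := by
        apply Finset.sum_eq_zero
        intro k _
        simp [Matrix.mulVec, dotProduct, hz]
      exact (hE i).ne' this
  set n := Real.sqrt (∑ j', (W i j') ^ 2) with hn_def
  have hWNv : ∀ v : Fin N → ℝ, WN.mulVec v i = W.mulVec v i / n := by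
    intro v
    simp only [Matrix.mulVec, dotProduct, hWN, ← hn_def,
      div_mul_eq_mul_div, ← Finset.sum_div]
  have hE' : ∑ k, (WN.mulVec (z k) i) ^ 2 = (∑ k, (W.mulVec (z k) i) ^ 2) / n ^ 2 := by
    simp [hWNv, div_pow, Finset.sum_div]
  have hsqrt : Real.sqrt ((∑ k, (W.mulVec (z k) i) ^ 2) / n ^ 2)
      = Real.sqrt (∑ k, (W.mulVec (z k) i) ^ 2) / n := by
    rw [Real.sqrt_div (le_of_lt (hE i)), Real.sqrt_sq hn.le]
  have hsE : 0 < Real.sqrt (∑ k, (W.mulVec (z k) i) ^ 2) := Real.sqrt_pos.2 (hE i)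
  rw [← Matrix.mulVec_mulVec, Matrix.mulVec_diagonal, Matrix.mulVec_diagonal, hE', hsqrt, hWNv]
  rcases le_or_gt (W.mulVec x i) 0 with ha | ha
  · rw [max_eq_right (mul_nonpos_of_nonneg_of_nonpos (inv_nonneg.2 hsE.le) ha),
      max_eq_right (div_nonpos_of_nonpos_of_nonneg ha hn.le), mul_zero]
  · rw [max_eq_left (mul_nonneg (inv_nonneg.2 hsE.le) ha.le),
      max_eq_left (div_nonneg ha.le hn.le)]
    field_simp
end

section
/- Let (X, d) be a pseudometric space, let Y be a finite label set, and let g : X → Y be a classifier. Let γ > 0, and suppose the training samples (x_1, y_1), …, (x_m, y_m) ∈ X × Y all have classification margin exceeding γ, i.e., for every i and every x ∈ X, d(x_i, x) ≤ γ implies g(x) = y_i. Let c : X → X be any map with d(x, c(x)) ≤ γ/2 for all x ∈ X (a γ/2-covering assignment). Then for every training index i and every sample (x, y) ∈ X × Y lying in the same cell of the induced partition, i.e., with c(x) = c(x_i) and y = y_i, the 0-1 losses agree: 1[g(x) ≠ y] = 1[g(x_i) ≠ y_i] = 0. -/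
/-- **Robustness of large-margin classifiers** (Theorem 2 of the paper, adapted from
Example 9 of Xu–Mannor). If every training sample has classification margin exceeding
`γ`, and `c` assigns to each point a center within distance `γ/2` (a `γ/2`-covering),
then for any test sample lying in the same cell of the induced partition as a training
sample (same center and same label), the 0-1 losses of both samples are `0`. -/
theorem margin_robustness
    (X : Type*) [PseudoMetricSpace X]
    (Y : Type*) [Fintype Y] [DecidableEq Y]
    (g : X → Y)
    (γ : ℝ) (hγ : 0 < γ)
    (m : ℕ) (x : Fin m → X) (y : Fin m → Y)
    (hmargin : ∀ i : Fin m, ∀ x' : X, dist (x i) x' ≤ γ → g x' = y i)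
    (c : X → X) (hc : ∀ x' : X, dist x' (c x') ≤ γ / 2) :
    ∀ (i : Fin m) (x' : X) (y' : Y), c x' = c (x i) → y' = y i →
      (if g x' ≠ y' then (1:ℝ) else 0) = 0 ∧
      (if g (x i) ≠ y i then (1:ℝ) else 0) = 0 := by
  intro i x' y' hcx hy
  have hdist : dist (x i) x' ≤ γ := by
    calc dist (x i) x' ≤ dist (x i) (c (x i)) + dist (c (x i)) x' := dist_triangle _ _ _
      _ = dist (x i) (c (x i)) + dist x' (c x') := by rw [hcx, dist_comm (c (x i)) x']
      _ ≤ γ / 2 + γ / 2 := add_le_add (hc _) (hc _)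
      _ = γ := by ring
  have h1 : g x' = y' := hy ▸ hmargin i x' hdist
  have h2 : g (x i) = y i := hmargin i (x i) (by simpa using hγ.le)
  simp [h1, h2]
end
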